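/- For any two density matrices ρ₁, ρ₂, the fidelity F(ρ₁,ρ₂) = (tr|√ρ₁·√ρ₂|)² satisfies F(ρ₁,ρ₂) ≤ G(ρ₁,ρ₂), where G is the superfidelity. -/

import Mathlib

open Matrix ComplexOrder

/-- The positive semidefinite square root, as defined in Mathlib of December 2024 (since removed). -/
noncomputable def Matrix.PosSemidef.sqrt {n 𝕜 : Type*} [Fintype n] [RCLike 𝕜] [DecidableEq n]
    {A : Matrix n n 𝕜} (hA : A.PosSemidef) : Matrix n n 𝕜 :=
  hA.1.eigenvectorUnitary.1 * diagonal ((↑) ∘ (√·) ∘ hA.1.eigenvalues) *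
    (star hA.1.eigenvectorUnitary : Matrix n n 𝕜)

noncomputable def sG {N : ℕ} (ρ σ : Matrix (Fin N) (Fin N) ℂ) : ℝ :=
  (trace (ρ * σ)).re +
    Real.sqrt (1 - (trace (ρ * ρ)).re) * Real.sqrt (1 - (trace (σ * σ)).re)

/-!
Let `A = √ρ₁` and `T = √(A ρ₂ A)`, so that `F = (tr T)²`. Since `T² = (√ρ₂ A)ᴴ (√ρ₂ A)`, polar
decomposition writes `T = A B` with `B Bᴴ = ρ₂`. Now `(tr T)² = tr T² + 2 tr Λ²T` with
`tr T² = tr ρ₁ρ₂`, and `Λ²T = Λ²A · Λ²B`, so Cauchy–Schwarz for the Hilbert–Schmidt inner product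
on the antisymmetric square bounds `2 tr Λ²T` by `2 ‖Λ²A‖ ‖Λ²B‖`. As `2 ‖Λ²X‖² = (tr XᴴX)² - tr (XᴴX)²`,
this is `√(1 - tr ρ₁²) √(1 - tr ρ₂²)` for unit-trace `ρᵢ`.
-/

open Kronecker RCLike

namespace Matrix

section Sqrt

open scoped MatrixOrder

variable {n 𝕜 : Type*} [Fintype n] [RCLike 𝕜] [DecidableEq n] {A : Matrix n n 𝕜}

theorem PosSemidef.sqrt_eq_cfc (hA : A.PosSemidef) : hA.sqrt = CFC.sqrt A := by
  rw [CFC.sqrt_eq_cfc, cfc_nnreal_eq_real _ A (nonneg_iff_posSemidef.mpr hA), hA.1.cfc_eq]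
  simp only [IsHermitian.cfc, PosSemidef.sqrt, Unitary.conjStarAlgAut_apply]
  congr 3
  funext i
  simp only [Function.comp_apply, Real.coe_sqrt, Real.coe_toNNReal',
    max_eq_left (hA.eigenvalues_nonneg i)]

theorem PosSemidef.posSemidef_sqrt (hA : A.PosSemidef) : hA.sqrt.PosSemidef := by
  rw [hA.sqrt_eq_cfc, ← nonneg_iff_posSemidef]
  exact CFC.sqrt_nonneg A

theorem PosSemidef.sqrt_mul_self (hA : A.PosSemidef) : hA.sqrt * hA.sqrt = A := by
  rw [hA.sqrt_eq_cfc]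
  exact CFC.sqrt_mul_sqrt_self A (nonneg_iff_posSemidef.mpr hA)

end Sqrt

section Swap

variable {n R : Type*} [DecidableEq n]

variable (n R) in
def swapMatrix [Zero R] [One R] : Matrix (n × n) (n × n) R :=
  Equiv.Perm.permMatrix R (Equiv.prodComm n n)

theorem swapMatrix_mul_self [Fintype n] [NonAssocSemiring R] :
    swapMatrix n R * swapMatrix n R = 1 := by
  rw [swapMatrix, ← permMatrix_mul]
  exact permMatrix_one

theorem conjTranspose_swapMatrix [NonAssocSemiring R] [StarRing R] :
    (swapMatrix n R)ᴴ = swapMatrix n R := by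
  rw [swapMatrix, conjTranspose_permMatrix]
  rfl

theorem trace_kronecker_mul_swapMatrix [Fintype n] [CommSemiring R] (A B : Matrix n n R) :
    trace ((A ⊗ₖ B) * swapMatrix n R) = trace (A * B) := by
  rw [swapMatrix, PEquiv.mul_toMatrix_toPEquiv]
  simp only [trace, diag, mul_apply, Fintype.sum_prod_type, submatrix_apply, id,
    Equiv.prodComm_symm, Equiv.prodComm_apply, Prod.swap_prod_mk, kroneckerMap_apply]

end Swap

theorem trace_mul_mul_mul_comm {n R : Type*} [Fintype n] [CommSemiring R] (X Y : Matrix n n R) :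
    trace (X * Y * (X * Y)) = trace (Y * X * (Y * X)) := by
  rw [← Matrix.mul_assoc, trace_mul_comm]
  simp only [Matrix.mul_assoc]

variable {𝕜 : Type*} [RCLike 𝕜]

theorem inner_toLp_uncurry {m n : Type*} [Fintype m] [Fintype n] (X Y : Matrix m n 𝕜) :
    inner 𝕜 (WithLp.toLp 2 (Function.uncurry X)) (WithLp.toLp 2 (Function.uncurry Y)) =
      trace (Xᴴ * Y) := by
  simp only [PiLp.inner_apply, RCLike.inner_apply, Fintype.sum_prod_type, trace, diag, mul_apply,
    conjTranspose_apply]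
  rw [Finset.sum_comm]
  exact Finset.sum_congr rfl fun _ _ => Finset.sum_congr rfl fun _ _ => mul_comm _ _

theorem re_trace_conjTranspose_mul_le {m n : Type*} [Fintype m] [Fintype n]
    (X Y : Matrix m n 𝕜) :
    re (trace (Xᴴ * Y)) ≤ √(re (trace (Xᴴ * X))) * √(re (trace (Yᴴ * Y))) := by
  simpa only [← inner_toLp_uncurry, ← norm_eq_sqrt_re_inner] using re_inner_le_norm _ _

theorem IsHermitian.ofReal_re_trace {n : Type*} [Fintype n] {A : Matrix n n 𝕜}
    (hA : A.IsHermitian) : ((re (trace A) : ℝ) : 𝕜) = trace A := by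
  rw [← RCLike.conj_eq_iff_re, ← star_def, ← trace_conjTranspose, hA.eq]

variable {n : Type*} [DecidableEq n]

variable (𝕜 n) in
noncomputable def antisymmetricProjection : Matrix (n × n) (n × n) 𝕜 :=
  (2⁻¹ : 𝕜) • (1 - swapMatrix n 𝕜)

theorem conjTranspose_antisymmetricProjection :
    (antisymmetricProjection 𝕜 n)ᴴ = antisymmetricProjection 𝕜 n := by
  simp [antisymmetricProjection, conjTranspose_sub, conjTranspose_swapMatrix]

variable [Fintype n]

theorem antisymmetricProjection_mul_self :
    antisymmetricProjection 𝕜 n * antisymmetricProjection 𝕜 n = antisymmetricProjection 𝕜 n := by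
  simp only [antisymmetricProjection, smul_mul_smul_comm, sub_mul, mul_sub, one_mul, mul_one,
    swapMatrix_mul_self]
  module

theorem two_mul_trace_kronecker_mul_antisymmetricProjection (A B : Matrix n n 𝕜) :
    2 * trace ((A ⊗ₖ B) * antisymmetricProjection 𝕜 n) = trace A * trace B - trace (A * B) := by
  rw [antisymmetricProjection, mul_smul_comm, trace_smul, mul_sub, mul_one, trace_sub,
    trace_kronecker_mul_swapMatrix, trace_kronecker, smul_eq_mul, ← mul_assoc,
    mul_inv_cancel₀ two_ne_zero, one_mul]

theorem trace_conjTranspose_mul_antisymmetricProjection (M N : Matrix (n × n) (n × n) 𝕜) :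
    trace ((M * antisymmetricProjection 𝕜 n)ᴴ * (N * antisymmetricProjection 𝕜 n)) =
      trace (Mᴴ * N * antisymmetricProjection 𝕜 n) := by
  rw [conjTranspose_mul, conjTranspose_antisymmetricProjection, Matrix.mul_assoc, trace_mul_comm,
    ← Matrix.mul_assoc, Matrix.mul_assoc _ (antisymmetricProjection 𝕜 n),
    antisymmetricProjection_mul_self]

theorem re_trace_sq_sub_trace_mul_self_le (A B : Matrix n n 𝕜) :
    re (trace (Aᴴ * B) ^ 2 - trace (Aᴴ * B * (Aᴴ * B))) ≤
      √(re (trace (Aᴴ * A) ^ 2 - trace (Aᴴ * A * (Aᴴ * A)))) *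
        √(re (trace (Bᴴ * B) ^ 2 - trace (Bᴴ * B * (Bᴴ * B)))) := by
  -- each side is twice a Hilbert–Schmidt inner product of antisymmetric squares `Λ²X = (X ⊗ X) Q`
  have hgram : ∀ M N : Matrix n n 𝕜,
      trace (Mᴴ * N) ^ 2 - trace (Mᴴ * N * (Mᴴ * N)) =
        2 * trace (((M ⊗ₖ M) * antisymmetricProjection 𝕜 n)ᴴ *
          ((N ⊗ₖ N) * antisymmetricProjection 𝕜 n)) := fun M N => by
    rw [trace_conjTranspose_mul_antisymmetricProjection, conjTranspose_kronecker,
      ← mul_kronecker_mul, two_mul_trace_kronecker_mul_antisymmetricProjection, sq]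
  simp only [hgram, ofNat_mul_re]
  rw [Real.sqrt_mul zero_le_two, Real.sqrt_mul zero_le_two, mul_mul_mul_comm,
    Real.mul_self_sqrt zero_le_two]
  exact mul_le_mul_of_nonneg_left (re_trace_conjTranspose_mul_le _ _) zero_le_two

theorem norm_toEuclideanCLM_apply_eq_of_conjTranspose_mul_self_eq {A B : Matrix n n 𝕜}
    (h : Aᴴ * A = Bᴴ * B) (v : EuclideanSpace 𝕜 n) :
    ‖toEuclideanCLM (𝕜 := 𝕜) A v‖ = ‖toEuclideanCLM (𝕜 := 𝕜) B v‖ := by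
  have hsq : ∀ M : Matrix n n 𝕜, ‖toEuclideanCLM (𝕜 := 𝕜) M v‖ ^ 2 =
      re (inner 𝕜 (toEuclideanCLM (𝕜 := 𝕜) (Mᴴ * M) v) v) := fun M => by
    rw [ContinuousLinearMap.apply_norm_sq_eq_inner_adjoint_left, map_mul,
      ← star_eq_conjTranspose, map_star, ContinuousLinearMap.star_eq_adjoint]
    rfl
  rw [← sq_eq_sq₀ (norm_nonneg _) (norm_nonneg _), hsq, hsq, h]

theorem exists_mem_unitaryGroup_mul_eq_of_conjTranspose_mul_self_eq {A B : Matrix n n 𝕜}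
    (h : Aᴴ * A = Bᴴ * B) : ∃ U ∈ unitaryGroup n 𝕜, U * A = B := by
  set f := toEuclideanLin A
  set g := toEuclideanLin B
  have hnorm : ∀ v, ‖g v‖ = ‖f v‖ := fun v =>
    (norm_toEuclideanCLM_apply_eq_of_conjTranspose_mul_self_eq h v).symm
  have hker : LinearMap.ker f ≤ LinearMap.ker g := fun v hv => by
    simpa [← norm_eq_zero (a := g v), hnorm] using hv
  -- `f v ↦ g v` is a well-defined isometry on the range of `f`; extend it to the whole space.
  let L : LinearMap.range f →ₗᵢ[𝕜] EuclideanSpace 𝕜 n :=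
    { toLinearMap := (LinearMap.ker f).liftQ g hker ∘ₗ f.quotKerEquivRange.symm.toLinearMap
      norm_map' := by
        rintro ⟨_, v, rfl⟩
        change ‖(LinearMap.ker f).liftQ g hker
          (f.quotKerEquivRange.symm ⟨f v, LinearMap.mem_range_self f v⟩)‖ = ‖f v‖
        rw [LinearMap.quotKerEquivRange_symm_apply_image, Submodule.mkQ_apply,
          Submodule.liftQ_apply]
        exact hnorm v }
  have hL : ∀ v, L.extend (f v) = g v := fun v => by
    simpa [L, LinearMap.quotKerEquivRange_symm_apply_image] using
      L.extend_apply ⟨f v, LinearMap.mem_range_self f v⟩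
  let u : unitary (EuclideanSpace 𝕜 n →L[𝕜] EuclideanSpace 𝕜 n) :=
    Unitary.linearIsometryEquiv.symm (L.extend.toLinearIsometryEquiv rfl)
  refine ⟨(toEuclideanCLM (𝕜 := 𝕜) (n := n)).symm u, Unitary.map_mem _ u.2,
    EquivLike.injective (toEuclideanCLM (𝕜 := 𝕜) (n := n)) ?_⟩
  rw [map_mul, StarAlgEquiv.apply_symm_apply]
  ext v : 1
  exact hL v

theorem re_trace_sq_le_of_mul_self_eq {A S T : Matrix n n 𝕜} (hA : A.IsHermitian)
    (hS : S.IsHermitian) (hT : T.IsHermitian) (hTT : T * T = A * (S * S) * A) :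
    re (trace T) ^ 2 ≤ re (trace (A * A * (S * S))) +
      √(re (trace (A * A) ^ 2 - trace (A * A * (A * A)))) *
        √(re (trace (S * S) ^ 2 - trace (S * S * (S * S)))) := by
  obtain ⟨U, hU, hUSA⟩ : ∃ U ∈ unitaryGroup n 𝕜, U * (S * A) = T := by
    refine exists_mem_unitaryGroup_mul_eq_of_conjTranspose_mul_self_eq ?_
    rw [hT.eq, hTT, conjTranspose_mul, hA.eq, hS.eq]
    simp only [Matrix.mul_assoc]
  set B := S * Uᴴ
  have hTAB : T = Aᴴ * B := by
    rw [← hT.eq, ← hUSA, conjTranspose_mul, conjTranspose_mul, hS.eq, Matrix.mul_assoc]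
  have hBB : B * Bᴴ = S * S := by
    rw [conjTranspose_mul, conjTranspose_conjTranspose, hS.eq, Matrix.mul_assoc,
      ← Matrix.mul_assoc Uᴴ, ← star_eq_conjTranspose, mem_unitaryGroup_iff'.mp hU, Matrix.one_mul]
  have key := re_trace_sq_sub_trace_mul_self_le A B
  rw [← hTAB, hA.eq, trace_mul_comm Bᴴ, trace_mul_mul_mul_comm Bᴴ, hBB, hTT, trace_mul_comm,
    ← Matrix.mul_assoc, ← hT.ofReal_re_trace, ← ofReal_pow, map_sub, ofReal_re] at key
  linarith

end Matrix

theorem fidelity_le_superfidelity {N : ℕ}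
    (ρ₁ ρ₂ : Matrix (Fin N) (Fin N) ℂ)
    (h₁ : ρ₁.PosSemidef) (h₂ : ρ₂.PosSemidef)
    (ht₁ : trace ρ₁ = 1) (ht₂ : trace ρ₂ = 1)
    (hm : (h₁.sqrt * ρ₂ * h₁.sqrt).PosSemidef) :
    ((trace hm.sqrt).re) ^ 2 ≤ sG ρ₁ ρ₂ := by
  have h := re_trace_sq_le_of_mul_self_eq h₁.posSemidef_sqrt.1 h₂.posSemidef_sqrt.1
    hm.posSemidef_sqrt.1 (by rw [hm.sqrt_mul_self, h₂.sqrt_mul_self])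
  rw [h₁.sqrt_mul_self, h₂.sqrt_mul_self, ht₁, ht₂, one_pow, map_sub, map_sub, one_re] at h
  exact h
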